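/- arXiv:1407.6963 — 2 statements merged into one kernel-verified Lean document; each statement's English description precedes it below -/
import Mathlib

section
/- Let g be a Lorentzian metric, u a unit timelike vector field, F > 0 smooth, C = Fu, ḡ = F²g with connection ∇̄, and define Σ̄_{αβ} = ∇̄_α C_β + ∇̄_β C_α - C̄^λ(∇̄_λ C_α C_β + ∇̄_λ C_β C_α) where C̄^α = F^{-1}u^α. Let π_{αβ} = g_{αβ} - u_α u_β and Σ_{αβ} = F π_α^μ π_β^ν(∇_μ u_ν + ∇_ν u_μ). Then Σ̄_{αβ} = Σ_{αβ} + 2π_{αβ} u^ρ∂_ρ F. -/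
noncomputable section

/-- Points of the coordinate chart ℝ⁴. -/
abbrev Pt := Fin 4 → ℝ

/-- Partial derivative ∂ᵢf at x. -/
def pd (i : Fin 4) (f : Pt → ℝ) (x : Pt) : ℝ := fderiv ℝ f x (Pi.single i 1)

/-- Christoffel symbols Γ^l_{ab} of the metric `g` with inverse `ginv`. -/
def Christoffel (g ginv : Pt → Fin 4 → Fin 4 → ℝ) (l a b : Fin 4) (x : Pt) : ℝ :=
  (1/2) * ∑ r : Fin 4, ginv x l r *
    (pd a (fun y => g y r b) x + pd b (fun y => g y r a) x - pd r (fun y => g y a b) x)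

/-- Covariant derivative of a one-form: ∇_a v_b. -/
def covOne (g ginv : Pt → Fin 4 → Fin 4 → ℝ) (v : Pt → Fin 4 → ℝ) (a b : Fin 4) (x : Pt) : ℝ :=
  pd a (fun y => v y b) x - ∑ l : Fin 4, Christoffel g ginv l a b x * v x l

/-- Covariant derivative of a vector field: ∇_a v^b. -/
def covVec (g ginv : Pt → Fin 4 → Fin 4 → ℝ) (v : Pt → Fin 4 → ℝ) (a b : Fin 4) (x : Pt) : ℝ :=
  pd a (fun y => v y b) x + ∑ l : Fin 4, Christoffel g ginv b a l x * v x l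

/-- The metric `g` together with `ginv` is a smooth symmetric metric with inverse `ginv`. -/
structure IsMetric (g ginv : Pt → Fin 4 → Fin 4 → ℝ) : Prop where
  symm : ∀ x a b, g x a b = g x b a
  inv : ∀ x a b, (∑ c : Fin 4, g x a c * ginv x c b) = if a = b then (1:ℝ) else 0
  smooth : ∀ a b, ContDiff ℝ (⊤ : ℕ∞) (fun x => g x a b)
  smooth_inv : ∀ a b, ContDiff ℝ (⊤ : ℕ∞) (fun x => ginv x a b)

end
noncomputable section

/-! ### Auxiliary lemmas -/

lemma pd_const (i : Fin 4) (x : Pt) (c : ℝ) : pd i (fun _ => c) x = 0 := by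
  simp [pd]

lemma pd_mul {f h : Pt → ℝ} {x : Pt} (hf : DifferentiableAt ℝ f x)
    (hh : DifferentiableAt ℝ h x) (i : Fin 4) :
    pd i (fun y => f y * h y) x = pd i f x * h x + f x * pd i h x := by
  unfold pd
  rw [fderiv_fun_mul hf hh]
  simp only [ContinuousLinearMap.add_apply, ContinuousLinearMap.smul_apply, smul_eq_mul]
  ring

lemma pd_sum {ι : Type*} (s : Finset ι) (f : ι → Pt → ℝ) {x : Pt}
    (hf : ∀ j ∈ s, DifferentiableAt ℝ (f j) x) (i : Fin 4) :
    pd i (fun y => ∑ j ∈ s, f j y) x = ∑ j ∈ s, pd i (f j) x := by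
  unfold pd
  rw [fderiv_fun_sum hf]
  simp

lemma sum2_congr {f h : Fin 4 → Fin 4 → ℝ} (e : ∀ a b, f a b = h a b) :
    ∑ a : Fin 4, ∑ b : Fin 4, f a b = ∑ a : Fin 4, ∑ b : Fin 4, h a b :=
  Finset.sum_congr rfl fun a _ => Finset.sum_congr rfl fun b _ => e a b

lemma sum2_add (f h : Fin 4 → Fin 4 → ℝ) :
    ∑ a : Fin 4, ∑ b : Fin 4, (f a b + h a b)
      = (∑ a : Fin 4, ∑ b : Fin 4, f a b) + (∑ a : Fin 4, ∑ b : Fin 4, h a b) := by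
  simp [Finset.sum_add_distrib]

lemma sum2_sub (f h : Fin 4 → Fin 4 → ℝ) :
    ∑ a : Fin 4, ∑ b : Fin 4, (f a b - h a b)
      = (∑ a : Fin 4, ∑ b : Fin 4, f a b) - (∑ a : Fin 4, ∑ b : Fin 4, h a b) := by
  simp [Finset.sum_sub_distrib]

lemma sum2_swap (f : Fin 4 → Fin 4 → ℝ) :
    ∑ a : Fin 4, ∑ b : Fin 4, f a b = ∑ a : Fin 4, ∑ b : Fin 4, f b a :=
  Finset.sum_comm

lemma ginv_g {g ginv : Pt → Fin 4 → Fin 4 → ℝ} (hmet : IsMetric g ginv) (x : Pt)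
    (l b : Fin 4) : (∑ r : Fin 4, ginv x l r * g x r b) = if l = b then (1:ℝ) else 0 := by
  have h1 : (Matrix.of (g x)) * (Matrix.of (ginv x)) = 1 := by
    ext a c
    simp [Matrix.mul_apply, Matrix.one_apply, hmet.inv x a c]
  have h2 : (Matrix.of (ginv x)) * (Matrix.of (g x)) = 1 := mul_eq_one_comm.mp h1
  have := congrFun (congrFun h2 l) b
  simpa [Matrix.mul_apply, Matrix.one_apply] using this

lemma lowered_christoffel {g ginv : Pt → Fin 4 → Fin 4 → ℝ} (hmet : IsMetric g ginv) (x : Pt)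
    (b a c : Fin 4) :
    (∑ l : Fin 4, g x b l * Christoffel g ginv l a c x)
      = (1/2) * (pd a (fun y => g y b c) x + pd c (fun y => g y b a) x
          - pd b (fun y => g y a c) x) := by
  simp only [Christoffel]
  have h1 : ∀ l : Fin 4, g x b l * ((1/2) * ∑ r : Fin 4, ginv x l r *
      (pd a (fun y => g y r c) x + pd c (fun y => g y r a) x - pd r (fun y => g y a c) x))
    = ∑ r : Fin 4, (1/2) * (g x b l * ginv x l r) *
      (pd a (fun y => g y r c) x + pd c (fun y => g y r a) x - pd r (fun y => g y a c) x) := by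
    intro l
    rw [Finset.mul_sum, Finset.mul_sum]
    exact Finset.sum_congr rfl fun r _ => by ring
  rw [Finset.sum_congr rfl fun l _ => h1 l, Finset.sum_comm]
  have h2 : ∀ r : Fin 4, (∑ l : Fin 4, (1/2) * (g x b l * ginv x l r) *
      (pd a (fun y => g y r c) x + pd c (fun y => g y r a) x - pd r (fun y => g y a c) x))
    = (1/2) * (if b = r then (1:ℝ) else 0) *
      (pd a (fun y => g y r c) x + pd c (fun y => g y r a) x - pd r (fun y => g y a c) x) := by
    intro r
    rw [← Finset.sum_mul, ← Finset.mul_sum, hmet.inv x b r]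
  rw [Finset.sum_congr rfl fun r _ => h2 r]
  simp

/-- contraction: ∑_l ginv^{lr} (∑_μ g_{lμ} v^μ) = v^r. -/
lemma contract1 {g ginv : Pt → Fin 4 → Fin 4 → ℝ} (hmet : IsMetric g ginv) (x : Pt)
    (v : Fin 4 → ℝ) (r : Fin 4) :
    (∑ l : Fin 4, ginv x l r * ∑ μ : Fin 4, g x l μ * v μ) = v r := by
  have h1 : ∀ l : Fin 4, ginv x l r * (∑ μ : Fin 4, g x l μ * v μ)
      = ∑ μ : Fin 4, (g x μ l * ginv x l r) * v μ := by
    intro l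
    rw [Finset.mul_sum]
    exact Finset.sum_congr rfl fun μ _ => by rw [hmet.symm x l μ]; ring
  rw [Finset.sum_congr rfl fun l _ => h1 l, Finset.sum_comm]
  have h2 : ∀ μ : Fin 4, (∑ l : Fin 4, (g x μ l * ginv x l r) * v μ)
      = (if μ = r then (1:ℝ) else 0) * v μ := by
    intro μ
    rw [← Finset.sum_mul, hmet.inv x μ r]
  rw [Finset.sum_congr rfl fun μ _ => h2 μ]
  simp

lemma sum2_mul_left (c : ℝ) (f : Fin 4 → Fin 4 → ℝ) :
    ∑ a : Fin 4, ∑ b : Fin 4, c * f a b = c * ∑ a : Fin 4, ∑ b : Fin 4, f a b := by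
  simp [Finset.mul_sum]

/-- first identity of Claim 1: Σ̄_{αβ} = Σ_{αβ} + 2π_{αβ}u^ρ∂_ρF. -/
theorem claim_one_first_identity
    (g ginv : Pt → Fin 4 → Fin 4 → ℝ) (hmet : IsMetric g ginv)
    (u : Pt → Fin 4 → ℝ) (hu : ∀ a, ContDiff ℝ (⊤ : ℕ∞) (fun x => u x a))
    (hnorm : ∀ x, (∑ a : Fin 4, ∑ b : Fin 4, g x a b * u x a * u x b) = 1)
    (F : Pt → ℝ) (hFpos : ∀ x, 0 < F x) (hF : ContDiff ℝ (⊤ : ℕ∞) F)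
    (ul C Cbar : Pt → Fin 4 → ℝ)
    (hul : ∀ x a, ul x a = ∑ μ : Fin 4, g x a μ * u x μ)
    (hCdef : ∀ x a, C x a = F x * ul x a)
    (hCbar : ∀ x a, Cbar x a = (F x)⁻¹ * u x a)
    (gbar gbarinv : Pt → Fin 4 → Fin 4 → ℝ)
    (hgbar : ∀ x a b, gbar x a b = (F x)^2 * g x a b)
    (hgbarinv : ∀ x a b, gbarinv x a b = ((F x)^2)⁻¹ * ginv x a b)
    -- projection π_{αβ} = g_{αβ} - u_αu_β and mixed projection π_α^μ = δ_α^μ - u_αu^μ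
    (π πmix : Pt → Fin 4 → Fin 4 → ℝ)
    (hπ : ∀ x a b, π x a b = g x a b - ul x a * ul x b)
    (hπmix : ∀ x a m, πmix x a m = (if a = m then (1:ℝ) else 0) - ul x a * u x m)
    -- shear tensor Σ_{αβ} = Fπ_α^μπ_β^ν(∇_μu_ν + ∇_νu_μ)
    (Sig : Pt → Fin 4 → Fin 4 → ℝ)
    (hSig : ∀ x a b, Sig x a b = F x * ∑ μ : Fin 4, ∑ ν : Fin 4,
        πmix x a μ * πmix x b ν * (covOne g ginv ul μ ν x + covOne g ginv ul ν μ x))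
    -- Σ̄_{αβ} = ∇̄_αC_β + ∇̄_βC_α - C̄^λ(∇̄_λC_α·C_β + ∇̄_λC_β·C_α)
    (Sigbar : Pt → Fin 4 → Fin 4 → ℝ)
    (hSigbar : ∀ x a b, Sigbar x a b =
        covOne gbar gbarinv C a b x + covOne gbar gbarinv C b a x
        - ∑ l : Fin 4, Cbar x l *
            (covOne gbar gbarinv C l a x * C x b + covOne gbar gbarinv C l b x * C x a)) :
    ∀ x (α β : Fin 4),
      Sigbar x α β = Sig x α β + 2 * π x α β * ∑ ρ : Fin 4, u x ρ * pd ρ F x := by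
  intro x α β
  classical
  -- basic differentiability at x
  have dF : DifferentiableAt ℝ F x := hF.differentiable (by simp) x
  have dg : ∀ a b, DifferentiableAt ℝ (fun y => g y a b) x :=
    fun a b => (hmet.smooth a b).differentiable (by simp) x
  have du : ∀ a, DifferentiableAt ℝ (fun y => u y a) x :=
    fun a => (hu a).differentiable (by simp) x
  have gsf : ∀ a b, (fun y => g y a b) = (fun y => g y b a) :=
    fun a b => funext fun y => hmet.symm y a b
  have hulfun : ∀ b, (fun y => ul y b) = fun y => ∑ μ : Fin 4, g y b μ * u y μ :=
    fun b => funext fun y => hul y b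
  have dul : ∀ b, DifferentiableAt ℝ (fun y => ul y b) x := by
    intro b; rw [hulfun b]
    exact DifferentiableAt.fun_sum fun μ _ => (dg b μ).mul (du μ)
  have hFne : F x ≠ 0 := (hFpos x).ne'
  set D : ℝ := ∑ ρ : Fin 4, u x ρ * pd ρ F x with hD
  -- pd of ul
  have pdul : ∀ i b, pd i (fun y => ul y b) x
      = ∑ ρ : Fin 4, (pd i (fun y => g y b ρ) x * u x ρ
          + g x b ρ * pd i (fun y => u y ρ) x) := by
    intro i b
    rw [hulfun b, pd_sum _ _ (fun ρ _ => (dg b ρ).fun_mul (du ρ)) i]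
    exact Finset.sum_congr rfl fun ρ _ => pd_mul (dg b ρ) (du ρ) i
  -- pd of C
  have pdC : ∀ i b, pd i (fun y => C y b) x
      = pd i F x * ul x b + F x * pd i (fun y => ul y b) x := by
    intro i b
    have e : (fun y => C y b) = fun y => F y * ul y b := funext fun y => hCdef y b
    rw [e]; exact pd_mul dF (dul b) i
  -- pd of F²
  have dF2 : DifferentiableAt ℝ (fun y => (F y)^2) x := dF.pow 2
  have pdF2 : ∀ i, pd i (fun y => (F y)^2) x = 2 * F x * pd i F x := by
    intro i
    have e : (fun y => (F y)^2) = fun y => F y * F y := funext fun y => sq (F y)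
    rw [e, pd_mul dF dF i]; ring
  -- pd of gbar
  have pdgbar : ∀ i r b, pd i (fun y => gbar y r b) x
      = 2 * F x * pd i F x * g x r b + (F x)^2 * pd i (fun y => g y r b) x := by
    intro i r b
    have e : (fun y => gbar y r b) = fun y => (F y)^2 * g y r b := funext fun y => hgbar y r b
    rw [e, pd_mul dF2 (dg r b) i, pdF2]
  -- conformal Christoffel symbols
  have Γbar : ∀ l a b, Christoffel gbar gbarinv l a b x = Christoffel g ginv l a b x
      + (F x)⁻¹ * (pd a F x * (if l = b then (1:ℝ) else 0)
        + pd b F x * (if l = a then (1:ℝ) else 0)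
        - g x a b * ∑ r : Fin 4, ginv x l r * pd r F x) := by
    intro l a b
    have step : ∀ r : Fin 4, gbarinv x l r *
        (pd a (fun y => gbar y r b) x + pd b (fun y => gbar y r a) x
          - pd r (fun y => gbar y a b) x)
      = ginv x l r * (pd a (fun y => g y r b) x + pd b (fun y => g y r a) x
          - pd r (fun y => g y a b) x)
        + 2 * (F x)⁻¹ * (pd a F x * (ginv x l r * g x r b)
          + pd b F x * (ginv x l r * g x r a)
          - g x a b * (ginv x l r * pd r F x)) := by
      intro r
      rw [hgbarinv, pdgbar, pdgbar, pdgbar]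
      field_simp
      ring
    simp only [Christoffel]
    rw [Finset.sum_congr rfl fun r _ => step r, Finset.sum_add_distrib, mul_add]
    congr 1
    rw [← Finset.mul_sum, Finset.sum_sub_distrib, Finset.sum_add_distrib,
      ← Finset.mul_sum, ← Finset.mul_sum, ← Finset.mul_sum,
      ginv_g hmet x l b, ginv_g hmet x l a]
    ring
  -- conformal covariant derivative of C
  have covCbar : ∀ a b, covOne gbar gbarinv C a b x
      = F x * covOne g ginv ul a b x - pd b F x * ul x a + g x a b * D := by
    intro a b
    have keylr : (∑ l : Fin 4, (∑ r : Fin 4, ginv x l r * pd r F x) * ul x l) = D := by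
      have h1 : ∀ l : Fin 4, (∑ r : Fin 4, ginv x l r * pd r F x) * ul x l
          = ∑ r : Fin 4, pd r F x * (ginv x l r * ul x l) := by
        intro l
        rw [Finset.sum_mul]
        exact Finset.sum_congr rfl fun r _ => by ring
      rw [Finset.sum_congr rfl fun l _ => h1 l, Finset.sum_comm]
      have h2 : ∀ r : Fin 4, (∑ l : Fin 4, pd r F x * (ginv x l r * ul x l))
          = pd r F x * u x r := by
        intro r
        rw [← Finset.mul_sum]
        congr 1
        have e : ∀ l : Fin 4, ginv x l r * ul x l
            = ginv x l r * ∑ μ : Fin 4, g x l μ * u x μ := fun l => by rw [hul x l]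
        rw [Finset.sum_congr rfl fun l _ => e l, contract1 hmet x (fun μ => u x μ) r]
      rw [Finset.sum_congr rfl fun r _ => h2 r, hD]
      exact Finset.sum_congr rfl fun r _ => by ring
    simp only [covOne]
    rw [pdC a b]
    have hΓC : (∑ l : Fin 4, Christoffel gbar gbarinv l a b x * C x l)
        = (∑ l : Fin 4, Christoffel g ginv l a b x * (F x * ul x l))
          + (F x)⁻¹ * (pd a F x * (F x * ul x b) + pd b F x * (F x * ul x a)
            - g x a b * (F x * D)) := by
      have e : ∀ l : Fin 4, Christoffel gbar gbarinv l a b x * C x l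
          = Christoffel g ginv l a b x * (F x * ul x l)
            + (F x)⁻¹ * (pd a F x * ((if l = b then (1:ℝ) else 0) * (F x * ul x l))
              + pd b F x * ((if l = a then (1:ℝ) else 0) * (F x * ul x l))
              - g x a b * ((∑ r : Fin 4, ginv x l r * pd r F x) * (F x * ul x l))) := by
        intro l
        rw [Γbar l a b, hCdef x l]
        ring
      have s1 : ∑ l : Fin 4, (if l = b then (1:ℝ) else 0) * (F x * ul x l)
          = F x * ul x b := by simp
      have s2 : ∑ l : Fin 4, (if l = a then (1:ℝ) else 0) * (F x * ul x l)
          = F x * ul x a := by simp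
      have s3 : ∑ l : Fin 4, (∑ r : Fin 4, ginv x l r * pd r F x) * (F x * ul x l)
          = F x * D := by
        rw [← keylr, Finset.mul_sum]
        exact Finset.sum_congr rfl fun l _ => by ring
      rw [Finset.sum_congr rfl fun l _ => e l, Finset.sum_add_distrib, ← Finset.mul_sum,
        Finset.sum_sub_distrib, Finset.sum_add_distrib,
        ← Finset.mul_sum, ← Finset.mul_sum, ← Finset.mul_sum, s1, s2, s3]
    have e2 : (∑ l : Fin 4, Christoffel g ginv l a b x * (F x * ul x l))
        = F x * ∑ l : Fin 4, Christoffel g ginv l a b x * ul x l := by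
      rw [Finset.mul_sum]; exact Finset.sum_congr rfl fun l _ => by ring
    rw [hΓC, e2]
    field_simp
    ring
  -- derivative of the normalization condition
  have normderiv : ∀ i : Fin 4,
      (∑ a : Fin 4, ∑ b : Fin 4, g x a b * u x a * pd i (fun y => u y b) x)
        = -(1/2) * ∑ a : Fin 4, ∑ b : Fin 4, pd i (fun y => g y a b) x * u x a * u x b := by
    intro i
    have dsum1 : ∀ a b : Fin 4, DifferentiableAt ℝ (fun y => g y a b * u y a * u y b) x :=
      fun a b => ((dg a b).mul (du a)).mul (du b)
    have hzero : pd i (fun y => ∑ a : Fin 4, ∑ b : Fin 4, g y a b * u y a * u y b) x = 0 := by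
      have e : (fun y => ∑ a : Fin 4, ∑ b : Fin 4, g y a b * u y a * u y b)
          = fun _ => (1:ℝ) := funext fun y => hnorm y
      rw [e, pd_const]
    have expand : pd i (fun y => ∑ a : Fin 4, ∑ b : Fin 4, g y a b * u y a * u y b) x
        = ∑ a : Fin 4, ∑ b : Fin 4, (pd i (fun y => g y a b) x * u x a * u x b
            + g x a b * pd i (fun y => u y a) x * u x b
            + g x a b * u x a * pd i (fun y => u y b) x) := by
      rw [pd_sum _ _ (fun a _ => DifferentiableAt.fun_sum fun b _ => dsum1 a b) i]
      refine Finset.sum_congr rfl fun a _ => ?_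
      rw [pd_sum _ _ (fun b _ => dsum1 a b) i]
      refine Finset.sum_congr rfl fun b _ => ?_
      rw [pd_mul ((dg a b).fun_mul (du a)) (du b) i, pd_mul (dg a b) (du a) i]
      ring
    have swap : (∑ a : Fin 4, ∑ b : Fin 4, g x a b * pd i (fun y => u y a) x * u x b)
        = ∑ a : Fin 4, ∑ b : Fin 4, g x a b * u x a * pd i (fun y => u y b) x := by
      rw [sum2_swap]
      exact sum2_congr fun a b => by rw [hmet.symm x b a]; ring
    have split : (∑ a : Fin 4, ∑ b : Fin 4, (pd i (fun y => g y a b) x * u x a * u x b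
            + g x a b * pd i (fun y => u y a) x * u x b
            + g x a b * u x a * pd i (fun y => u y b) x))
        = ((∑ a : Fin 4, ∑ b : Fin 4, pd i (fun y => g y a b) x * u x a * u x b)
            + (∑ a : Fin 4, ∑ b : Fin 4, g x a b * pd i (fun y => u y a) x * u x b))
          + (∑ a : Fin 4, ∑ b : Fin 4, g x a b * u x a * pd i (fun y => u y b) x) := by
      rw [← sum2_add, ← sum2_add]
    have h0 := hzero
    rw [expand, split, swap] at h0
    linarith
  -- orthogonality: u^ν ∇_μ u_ν = 0
  have orth : ∀ μ : Fin 4, (∑ ν : Fin 4, u x ν * covOne g ginv ul μ ν x) = 0 := by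
    intro μ
    simp only [covOne]
    have hA : (∑ ν : Fin 4, u x ν * pd μ (fun y => ul y ν) x)
        = (1/2) * ∑ ν : Fin 4, ∑ ρ : Fin 4, pd μ (fun y => g y ν ρ) x * u x ν * u x ρ := by
      have e : ∀ ν : Fin 4, u x ν * pd μ (fun y => ul y ν) x
          = ∑ ρ : Fin 4, (pd μ (fun y => g y ν ρ) x * u x ν * u x ρ
              + g x ν ρ * u x ν * pd μ (fun y => u y ρ) x) := by
        intro ν
        rw [pdul μ ν, Finset.mul_sum]
        exact Finset.sum_congr rfl fun ρ _ => by ring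
      rw [Finset.sum_congr rfl fun ν _ => e ν, sum2_add, normderiv μ]
      ring
    have hB : (∑ ν : Fin 4, u x ν * ∑ l : Fin 4, Christoffel g ginv l μ ν x * ul x l)
        = (1/2) * ∑ ν : Fin 4, ∑ ρ : Fin 4, pd μ (fun y => g y ν ρ) x * u x ν * u x ρ := by
      have inner : ∀ ν : Fin 4, (∑ l : Fin 4, Christoffel g ginv l μ ν x * ul x l)
          = ∑ σ : Fin 4, u x σ * ((1/2) * (pd μ (fun y => g y σ ν) x
              + pd ν (fun y => g y σ μ) x - pd σ (fun y => g y μ ν) x)) := by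
        intro ν
        have e : ∀ l : Fin 4, Christoffel g ginv l μ ν x * ul x l
            = ∑ σ : Fin 4, u x σ * (g x σ l * Christoffel g ginv l μ ν x) := by
          intro l
          rw [hul x l, Finset.mul_sum]
          exact Finset.sum_congr rfl fun σ _ => by rw [hmet.symm x l σ]; ring
        rw [Finset.sum_congr rfl fun l _ => e l, Finset.sum_comm]
        refine Finset.sum_congr rfl fun σ _ => ?_
        rw [← Finset.mul_sum, lowered_christoffel hmet x σ μ ν]
      have combo : ∀ ν : Fin 4, u x ν * (∑ l : Fin 4, Christoffel g ginv l μ ν x * ul x l)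
          = ∑ σ : Fin 4, ((1/2) * (u x ν * u x σ * pd μ (fun y => g y σ ν) x)
              + (1/2) * (u x ν * u x σ * pd ν (fun y => g y σ μ) x)
              - (1/2) * (u x ν * u x σ * pd σ (fun y => g y μ ν) x)) := by
        intro ν
        rw [inner ν, Finset.mul_sum]
        exact Finset.sum_congr rfl fun σ _ => by ring
      rw [Finset.sum_congr rfl fun ν _ => combo ν, sum2_sub, sum2_add,
        sum2_mul_left, sum2_mul_left, sum2_mul_left]
      have hS23 : (∑ ν : Fin 4, ∑ σ : Fin 4, u x ν * u x σ * pd σ (fun y => g y μ ν) x)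
          = ∑ ν : Fin 4, ∑ σ : Fin 4, u x ν * u x σ * pd ν (fun y => g y σ μ) x := by
        rw [sum2_swap]
        exact sum2_congr fun ν σ => by rw [gsf μ σ]; ring
      have hS1 : (∑ ν : Fin 4, ∑ σ : Fin 4, u x ν * u x σ * pd μ (fun y => g y σ ν) x)
          = ∑ ν : Fin 4, ∑ ρ : Fin 4, pd μ (fun y => g y ν ρ) x * u x ν * u x ρ := by
        exact sum2_congr fun ν σ => by rw [gsf σ ν]; ring
      rw [hS1, hS23]
      ring
    have e3 : ∀ ν : Fin 4, u x ν * (pd μ (fun y => ul y ν) x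
          - ∑ l : Fin 4, Christoffel g ginv l μ ν x * ul x l)
        = u x ν * pd μ (fun y => ul y ν) x
          - u x ν * ∑ l : Fin 4, Christoffel g ginv l μ ν x * ul x l := fun ν => by ring
    rw [Finset.sum_congr rfl fun ν _ => e3 ν, Finset.sum_sub_distrib, hA, hB]
    ring
  -- normalization contractions
  have key2 : (∑ l : Fin 4, u x l * ul x l) = 1 := by
    have e : ∀ l : Fin 4, u x l * ul x l = ∑ μ : Fin 4, g x l μ * u x l * u x μ := by
      intro l
      rw [hul x l, Finset.mul_sum]
      exact Finset.sum_congr rfl fun μ _ => by ring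
    rw [Finset.sum_congr rfl fun l _ => e l]
    exact hnorm x
  have key3 : ∀ m : Fin 4, (∑ l : Fin 4, u x l * g x l m) = ul x m := by
    intro m
    rw [hul x m]
    exact Finset.sum_congr rfl fun l _ => by rw [hmet.symm x m l]; ring
  -- Σ expansion
  have SigExp : Sig x α β = F x * ((covOne g ginv ul α β x + covOne g ginv ul β α x)
      - ul x β * (∑ l : Fin 4, u x l * covOne g ginv ul l α x)
      - ul x α * (∑ l : Fin 4, u x l * covOne g ginv ul l β x)) := by
    rw [hSig]
    congr 1
    have e : ∀ μ ν : Fin 4, πmix x α μ * πmix x β ν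
          * (covOne g ginv ul μ ν x + covOne g ginv ul ν μ x)
        = (if α = μ then (1:ℝ) else 0) * ((if β = ν then (1:ℝ) else 0)
            * (covOne g ginv ul μ ν x + covOne g ginv ul ν μ x))
          - (if α = μ then (1:ℝ) else 0) * (ul x β * (u x ν
            * (covOne g ginv ul μ ν x + covOne g ginv ul ν μ x)))
          - (if β = ν then (1:ℝ) else 0) * (ul x α * (u x μ
            * (covOne g ginv ul μ ν x + covOne g ginv ul ν μ x)))
          + (ul x α * ul x β) * (u x μ * (u x ν
            * (covOne g ginv ul μ ν x + covOne g ginv ul ν μ x))) := by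
      intro μ ν
      rw [hπmix x α μ, hπmix x β ν]
      ring
    rw [sum2_congr e, sum2_add, sum2_sub, sum2_sub]
    have P1 : (∑ μ : Fin 4, ∑ ν : Fin 4, (if α = μ then (1:ℝ) else 0)
          * ((if β = ν then (1:ℝ) else 0)
            * (covOne g ginv ul μ ν x + covOne g ginv ul ν μ x)))
        = covOne g ginv ul α β x + covOne g ginv ul β α x := by
      simp
    have P2 : (∑ μ : Fin 4, ∑ ν : Fin 4, (if α = μ then (1:ℝ) else 0) * (ul x β * (u x ν
          * (covOne g ginv ul μ ν x + covOne g ginv ul ν μ x))))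
        = ul x β * (∑ l : Fin 4, u x l * covOne g ginv ul l α x) := by
      have e2 : ∀ μ : Fin 4, (∑ ν : Fin 4, (if α = μ then (1:ℝ) else 0) * (ul x β * (u x ν
            * (covOne g ginv ul μ ν x + covOne g ginv ul ν μ x))))
          = (if α = μ then (1:ℝ) else 0) * (∑ ν : Fin 4, ul x β * (u x ν
            * (covOne g ginv ul μ ν x + covOne g ginv ul ν μ x))) := by
        intro μ; rw [Finset.mul_sum]
      rw [Finset.sum_congr rfl fun μ _ => e2 μ]
      simp only [ite_mul, one_mul, zero_mul]
      rw [Finset.sum_ite_eq]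
      simp only [Finset.mem_univ, if_true]
      have e4 : ∀ ν : Fin 4, ul x β * (u x ν
            * (covOne g ginv ul α ν x + covOne g ginv ul ν α x))
          = ul x β * (u x ν * covOne g ginv ul α ν x)
            + ul x β * (u x ν * covOne g ginv ul ν α x) := fun ν => by ring
      rw [Finset.sum_congr rfl fun ν _ => e4 ν, Finset.sum_add_distrib,
        ← Finset.mul_sum, ← Finset.mul_sum, orth α, mul_zero, zero_add]
    have P3 : (∑ μ : Fin 4, ∑ ν : Fin 4, (if β = ν then (1:ℝ) else 0) * (ul x α * (u x μ
          * (covOne g ginv ul μ ν x + covOne g ginv ul ν μ x))))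
        = ul x α * (∑ l : Fin 4, u x l * covOne g ginv ul l β x) := by
      have e2 : ∀ μ : Fin 4, (∑ ν : Fin 4, (if β = ν then (1:ℝ) else 0) * (ul x α * (u x μ
            * (covOne g ginv ul μ ν x + covOne g ginv ul ν μ x))))
          = ul x α * (u x μ * (covOne g ginv ul μ β x + covOne g ginv ul β μ x)) := by
        intro μ
        simp only [ite_mul, one_mul, zero_mul]
        rw [Finset.sum_ite_eq]
        simp
      rw [Finset.sum_congr rfl fun μ _ => e2 μ]
      have e4 : ∀ μ : Fin 4, ul x α * (u x μ
            * (covOne g ginv ul μ β x + covOne g ginv ul β μ x))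
          = ul x α * (u x μ * covOne g ginv ul μ β x)
            + ul x α * (u x μ * covOne g ginv ul β μ x) := fun μ => by ring
      rw [Finset.sum_congr rfl fun μ _ => e4 μ, Finset.sum_add_distrib,
        ← Finset.mul_sum, ← Finset.mul_sum, orth β, mul_zero, add_zero]
    have P4 : (∑ μ : Fin 4, ∑ ν : Fin 4, (ul x α * ul x β) * (u x μ * (u x ν
          * (covOne g ginv ul μ ν x + covOne g ginv ul ν μ x)))) = 0 := by
      rw [sum2_mul_left]
      have e2 : ∀ μ : Fin 4, (∑ ν : Fin 4, u x μ * (u x ν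
            * (covOne g ginv ul μ ν x + covOne g ginv ul ν μ x)))
          = u x μ * ∑ ν : Fin 4, u x ν
            * (covOne g ginv ul μ ν x + covOne g ginv ul ν μ x) := by
        intro μ; rw [Finset.mul_sum]
      have e5 : ∀ μ : Fin 4, (∑ ν : Fin 4, u x ν
            * (covOne g ginv ul μ ν x + covOne g ginv ul ν μ x))
          = ∑ ν : Fin 4, u x ν * covOne g ginv ul ν μ x := by
        intro μ
        have e4 : ∀ ν : Fin 4, u x ν * (covOne g ginv ul μ ν x + covOne g ginv ul ν μ x)
            = u x ν * covOne g ginv ul μ ν x + u x ν * covOne g ginv ul ν μ x :=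
          fun ν => by ring
        rw [Finset.sum_congr rfl fun ν _ => e4 ν, Finset.sum_add_distrib, orth μ, zero_add]
      have e6 : (∑ μ : Fin 4, ∑ ν : Fin 4, u x μ * (u x ν * covOne g ginv ul ν μ x)) = 0 := by
        rw [sum2_swap]
        have e7 : ∀ μ ν : Fin 4, u x ν * (u x μ * covOne g ginv ul μ ν x)
            = u x ν * (u x μ * covOne g ginv ul μ ν x) := fun _ _ => rfl
        have e8 : ∀ μ : Fin 4, (∑ ν : Fin 4, u x ν * (u x μ * covOne g ginv ul μ ν x))
            = u x μ * ∑ ν : Fin 4, u x ν * covOne g ginv ul μ ν x := by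
          intro μ
          rw [Finset.mul_sum]
          exact Finset.sum_congr rfl fun ν _ => by ring
        rw [Finset.sum_congr rfl fun μ _ => e8 μ]
        rw [Finset.sum_congr rfl fun μ _ => by rw [orth μ, mul_zero]]
        simp
      rw [Finset.sum_congr rfl fun μ _ => by rw [e2 μ, e5 μ]]
      rw [Finset.sum_congr rfl fun μ _ => (Finset.mul_sum _ _ _ : u x μ
        * (∑ ν : Fin 4, u x ν * covOne g ginv ul ν μ x)
        = ∑ ν : Fin 4, u x μ * (u x ν * covOne g ginv ul ν μ x))]
      rw [e6, mul_zero]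
    rw [P1, P2, P3, P4]
    ring
  -- contraction of Cbar with the conformal covariant derivative
  have contrW : ∀ m : Fin 4, (∑ l : Fin 4, Cbar x l * covOne gbar gbarinv C l m x)
      = (∑ l : Fin 4, u x l * covOne g ginv ul l m x)
        - ((F x)⁻¹ * pd m F x) * 1 + ((F x)⁻¹ * D) * ul x m := by
    intro m
    have e : ∀ l : Fin 4, Cbar x l * covOne gbar gbarinv C l m x
        = u x l * covOne g ginv ul l m x
          - ((F x)⁻¹ * pd m F x) * (u x l * ul x l)
          + ((F x)⁻¹ * D) * (u x l * g x l m) := by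
      intro l
      rw [hCbar x l, covCbar l m]
      field_simp
    rw [Finset.sum_congr rfl fun l _ => e l, Finset.sum_add_distrib,
      Finset.sum_sub_distrib, ← Finset.mul_sum, ← Finset.mul_sum, key2, key3 m]
  -- final assembly
  have esplit : (∑ l : Fin 4, Cbar x l * (covOne gbar gbarinv C l α x * C x β
        + covOne gbar gbarinv C l β x * C x α))
      = (∑ l : Fin 4, Cbar x l * covOne gbar gbarinv C l α x) * C x β
        + (∑ l : Fin 4, Cbar x l * covOne gbar gbarinv C l β x) * C x α := by
    rw [Finset.sum_mul, Finset.sum_mul, ← Finset.sum_add_distrib]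
    exact Finset.sum_congr rfl fun l _ => by ring
  rw [hSigbar x α β, SigExp, covCbar α β, covCbar β α, esplit, contrW α, contrW β,
    hCdef x β, hCdef x α, hπ x α β, hmet.symm x β α]
  field_simp
  ring


end
end

section
/- Assume a relativistic fluid with u^αu_α = 1, θ > 0, r > 0, F > 0, ϑ ≤ 0, satisfying θ r u^α ∂_α s = ϑF(∇^μu^ν∇_μu_ν + ∇^μu^ν∇_νu_μ - u^μ∇_μu^α u^ν∇_νu_α). Then, using Σ^{αβ}Σ_{αβ} = 2F²(∇^μu^ν∇_μu_ν + ∇^μu^ν∇_νu_μ - u^μ∇_μu^α u^ν∇_νu_α) and Σ^{αβ}Σ_{αβ} ≤ 0 (which holds since Σ is a symmetric tensor orthogonal to u in a metric of signature (+,-,-,-)), the entropy production along the flow is nonnegative: u^α∂_α s = (ϑ/(2θrF)) Σ^{αβ}Σ_{αβ} ≥ 0. -/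
/-- nonnegativity of entropy production along the flow. Here
`uds` denotes u^α∂_αs, `E` denotes ∇^μu^ν∇_μu_ν + ∇^μu^ν∇_νu_μ
- u^μ∇_μu^α u^ν∇_νu_α, and `SS` denotes Σ^{αβ}Σ_{αβ}. -/
theorem entropy_production_nonnegative
    (θ r F ϑ uds E SS : ℝ)
    (hθ : 0 < θ) (hr : 0 < r) (hF : 0 < F) (hϑ : ϑ ≤ 0)
    (heq : θ * r * uds = ϑ * F * E)
    (hSS : SS = 2 * F^2 * E)
    (hSSneg : SS ≤ 0) :
    uds = ϑ / (2 * θ * r * F) * SS ∧ 0 ≤ uds := by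
  have hcoeff : ϑ / (2 * θ * r * F) ≤ 0 := div_nonpos_of_nonpos_of_nonneg hϑ (by positivity)
  have hrate : uds = ϑ / (2 * θ * r * F) * SS := by
    rw [hSS]
    field_simp
    linear_combination heq
  exact ⟨hrate, hrate ▸ mul_nonneg_of_nonpos_of_nonpos hcoeff hSSneg⟩
end
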